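/- Most general force variational with multiplier g (Proposition 3.1): Let U ⊆ ℝⁿ be open, g : U → (Fin n → Fin n → ℝ) smooth with g(x) symmetric and invertible for every x, and F : U × ℝⁿ → ℝⁿ smooth. Suppose there exists a smooth Lagrangian 𝓛 : U × ℝⁿ → ℝ whose Euler–Lagrange expression matches the system with multiplier g, i.e. for all x ∈ U, v ∈ ℝⁿ, w ∈ ℝⁿ and every index a: Σ_b (∂²𝓛/∂v^a∂v^b)(x,v) w^b + Σ_b (∂²𝓛/∂x^b∂v^a)(x,v) v^b − (∂𝓛/∂x^a)(x,v) = Σ_b g_{ab}(x) (w^b − F^b(x,v)). Then there exist smooth maps P : U → (Fin n → Fin n → ℝ) and S : U → (Fin n → ℝ) such that for all x ∈ U, v ∈ ℝⁿ and every index a: F^a(x,v) = −Σ_{b,c} Γ[g]^a_{bc}(x) v^b v^c + Σ_b P^a_b(x) v^b + S^a(x), where Γ[g]^a_{bc} are the Christoffel symbols of g. -/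

import Mathlib

open scoped BigOperators

/-- Partial derivative of `f` in the `a`-th coordinate direction of `ℝⁿ`. -/
noncomputable def pd {n : ℕ} (f : (Fin n → ℝ) → ℝ) (a : Fin n) (x : Fin n → ℝ) : ℝ :=
  fderiv ℝ f x (Pi.single a 1)

/-- Matrix inverse of a square array of reals. -/
noncomputable def minv {n : ℕ} (A : Fin n → Fin n → ℝ) : Fin n → Fin n → ℝ :=
  fun a b => (Matrix.of A)⁻¹ a b

/-- Christoffel symbols `Γ[H]^a_{bc}(x)` of a (pointwise symmetric, invertible) tensor `H`. -/
noncomputable def christoffel {n : ℕ} (H : (Fin n → ℝ) → Fin n → Fin n → ℝ)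
    (x : Fin n → ℝ) (a b c : Fin n) : ℝ :=
  (1 / 2) * ∑ d, minv (H x) a d *
    (pd (fun y => H y c d) b x + pd (fun y => H y b d) c x - pd (fun y => H y b c) d x)

/-- First derivative `γ'^a(t)` of a curve in `ℝⁿ`. -/
noncomputable def cderiv {n : ℕ} (γ : ℝ → Fin n → ℝ) (a : Fin n) (t : ℝ) : ℝ :=
  deriv (fun s => γ s a) t

/-- Second derivative `γ''^a(t)` of a curve in `ℝⁿ`. -/
noncomputable def cderiv2 {n : ℕ} (γ : ℝ → Fin n → ℝ) (a : Fin n) (t : ℝ) : ℝ :=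
  deriv (cderiv γ a) t

/-- Partial derivative in the `a`-th position coordinate of the first slot of `U × ℝⁿ`. -/
noncomputable def pdx {n : ℕ} (f : (Fin n → ℝ) × (Fin n → ℝ) → ℝ) (a : Fin n)
    (p : (Fin n → ℝ) × (Fin n → ℝ)) : ℝ :=
  fderiv ℝ f p (Pi.single a 1, 0)

/-- Partial derivative in the `a`-th velocity coordinate of the second slot of `U × ℝⁿ`. -/
noncomputable def pdv {n : ℕ} (f : (Fin n → ℝ) × (Fin n → ℝ) → ℝ) (a : Fin n)
    (p : (Fin n → ℝ) × (Fin n → ℝ)) : ℝ :=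
  fderiv ℝ f p (0, Pi.single a 1)


/-!
Comparing the coefficients of the acceleration `w` in the Euler–Lagrange identity gives
`∂²L/∂v^a∂v^b = g_{ab}`, so `∂L/∂v^a = A_a(x) + g_{ab}(x) v^b`. Hence
`∂²L/∂x^b∂v^a = ∂_b A_a + ∂_b g_{ac} v^c`, and by the symmetry of second derivatives the
`v`-gradient of `∂L/∂x^a` is `∂_a A_d + ∂_a g_{dc} v^c`, so `∂L/∂x^a` is the quadratic polynomial
`B_a + ∂_a A_b v^b + ½ ∂_a g_{bc} v^b v^c`. Substituted into the identity at `w = 0` this gives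
`g_{ab} F^b = B_a + (∂_a A_b - ∂_b A_a) v^b - Γ_{abc} v^b v^c` with the Christoffel symbols of the
first kind `Γ_{abc}`, and applying `g⁻¹` yields the claim with `S = g⁻¹ B` and
`P = g⁻¹ (∂A - (∂A)ᵀ)`.
-/

open Filter Topology

section Smoothness

variable {𝕜 E F : Type*} [NontriviallyNormedField 𝕜] [NormedAddCommGroup E] [NormedSpace 𝕜 E]
  [NormedAddCommGroup F] [NormedSpace 𝕜 F] {s : Set E} {k m : WithTop ℕ∞}

theorem ContDiffOn.fderiv_apply_of_isOpen {f : E → F} (hf : ContDiffOn 𝕜 k f s) (hs : IsOpen s)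
    (hmk : m + 1 ≤ k) (u : E) : ContDiffOn 𝕜 m (fun x => fderiv 𝕜 f x u) s :=
  (hf.fderiv_of_isOpen hs hmk).clm_apply contDiffOn_const

theorem ContDiffOn.matrix_det {ι : Type*} [Fintype ι] [DecidableEq ι] {M : E → Matrix ι ι 𝕜}
    (hM : ∀ i j, ContDiffOn 𝕜 k (fun x => M x i j) s) :
    ContDiffOn 𝕜 k (fun x => (M x).det) s := by
  simp only [Matrix.det_apply']
  exact ContDiffOn.sum fun σ _ => contDiffOn_const.mul (contDiffOn_prod fun i _ => hM _ _)

end Smoothness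

theorem ContDiffOn.minv {E : Type*} [NormedAddCommGroup E] [NormedSpace ℝ E] {s : Set E}
    {k : WithTop ℕ∞} {n : ℕ} {A : E → Fin n → Fin n → ℝ} (hA : ContDiffOn ℝ k A s)
    (hdet : ∀ x ∈ s, IsUnit (Matrix.of (A x)).det) :
    ContDiffOn ℝ k (fun x => _root_.minv (A x)) s := by
  have hA' : ∀ i j, ContDiffOn ℝ k (fun x => A x i j) s := fun i j =>
    contDiffOn_pi.1 (contDiffOn_pi.1 hA i) j
  -- Cramer's rule: `A⁻¹ = (det A)⁻¹ • adj A`, and the entries of `adj A` are determinants.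
  have hcramer : ∀ x a d, _root_.minv (A x) a d
      = ((Matrix.of (A x)).det)⁻¹ * ((Matrix.of (A x)).updateRow d (Pi.single a 1)).det := by
    intro x a d
    simp [_root_.minv, Matrix.inv_def, Matrix.adjugate_apply, Ring.inverse_eq_inv']
  refine contDiffOn_pi.2 fun a => contDiffOn_pi.2 fun d => ?_
  simp only [hcramer]
  refine ((ContDiffOn.matrix_det hA').inv fun x hx => (hdet x hx).ne_zero).mul
    (ContDiffOn.matrix_det fun i j => ?_)
  by_cases hi : i = d
  · simpa [hi] using contDiffOn_const
  · simpa [hi] using hA' i j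

theorem fderiv_fderiv_apply_comm {E F : Type*} [NormedAddCommGroup E] [NormedSpace ℝ E]
    [NormedAddCommGroup F] [NormedSpace ℝ F] {f : E → F} {x : E} (hf : ContDiffAt ℝ 2 f x)
    (u w : E) :
    fderiv ℝ (fun y => fderiv ℝ f y u) x w = fderiv ℝ (fun y => fderiv ℝ f y w) x u := by
  have hdf : DifferentiableAt ℝ (fderiv ℝ f) x :=
    (hf.fderiv_right (m := 1) le_rfl).differentiableAt one_ne_zero
  have happly : ∀ u, fderiv ℝ (fun y => fderiv ℝ f y u) x = (fderiv ℝ (fderiv ℝ f) x).flip u :=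
    fun u => by
      rw [fderiv_clm_apply hdf (differentiableAt_const u)]
      simp
  rw [happly, happly, ContinuousLinearMap.flip_apply, ContinuousLinearMap.flip_apply]
  exact (hf.isSymmSndFDerivAt (by simp)) w u

theorem ContinuousLinearMap.ext_pi_single {ι R M : Type*} [Finite ι] [DecidableEq ι] [Semiring R]
    [TopologicalSpace R] [TopologicalSpace M] [AddCommMonoid M] [Module R M]
    {T T' : (ι → R) →L[R] M} (h : ∀ i, T (Pi.single i 1) = T' (Pi.single i 1)) : T = T' :=
  ContinuousLinearMap.coe_injective <| LinearMap.pi_ext' fun i => LinearMap.ext_ring (h i)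

section Algebra

variable {ι : Type*} [Fintype ι]

theorem sum_mul_affine_quadratic {R : Type*} [CommRing R] (m s : ι → R) (P : ι → ι → R)
    (Q : ι → ι → ι → R) (v : ι → R) :
    ∑ d, m d * (s d + ∑ b, P d b * v b - ∑ b, ∑ c, Q d b c * v b * v c) =
      -∑ b, ∑ c, (∑ d, m d * Q d b c) * v b * v c + ∑ b, (∑ d, m d * P d b) * v b
        + ∑ d, m d * s d := by
  simp only [mul_add, mul_sub, Finset.sum_add_distrib, Finset.sum_sub_distrib, Finset.mul_sum,
    Finset.sum_mul]
  rw [Finset.sum_comm (f := fun d b => m d * (P d b * v b)),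
    Finset.sum_comm (f := fun d b => ∑ c, m d * (Q d b c * v b * v c))]
  simp only [Finset.sum_comm (f := fun d c => m d * _)]
  ring_nf

-- `D e b c` stands for `∂_e g_{bc}`; the left side is `Γ_{abc} v^b v^c`.
theorem sum_sum_christoffel_combination_mul {R : Type*} [Field R] [CharZero R]
    (D : ι → ι → ι → R) (hD : ∀ e b c, D e b c = D e c b) (a : ι) (v : ι → R) :
    ∑ b, ∑ c, 1 / 2 * (D b c a + D c b a - D a b c) * v b * v c =
      ∑ b, (∑ c, D b a c * v c) * v b - ∑ b, ∑ c, 1 / 2 * D a b c * v b * v c := by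
  have hswap : ∑ b, ∑ c, D c b a * v b * v c = ∑ b, ∑ c, D b c a * v b * v c := by
    rw [Finset.sum_comm]
    exact Finset.sum_congr rfl fun _ _ => Finset.sum_congr rfl fun _ _ => by ring
  calc ∑ b, ∑ c, 1 / 2 * (D b c a + D c b a - D a b c) * v b * v c
      = 1 / 2 * ∑ b, ∑ c, D b c a * v b * v c + 1 / 2 * ∑ b, ∑ c, D c b a * v b * v c
          - ∑ b, ∑ c, 1 / 2 * D a b c * v b * v c := by
        simp only [Finset.mul_sum, ← Finset.sum_add_distrib, ← Finset.sum_sub_distrib]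
        exact Finset.sum_congr rfl fun _ _ => Finset.sum_congr rfl fun _ _ => by ring
    _ = ∑ b, ∑ c, D b c a * v b * v c - ∑ b, ∑ c, 1 / 2 * D a b c * v b * v c := by
        rw [hswap]
        ring
    _ = ∑ b, (∑ c, D b a c * v c) * v b - ∑ b, ∑ c, 1 / 2 * D a b c * v b * v c := by
        simp only [Finset.sum_mul, hD _ a]
        congr 1
        exact Finset.sum_congr rfl fun _ _ => Finset.sum_congr rfl fun _ _ => by ring

end Algebra

section PartialDerivatives

variable {n : ℕ}

theorem eq_of_pd_eq {φ ψ : (Fin n → ℝ) → ℝ} (hφ : Differentiable ℝ φ) (hψ : Differentiable ℝ ψ)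
    (h : ∀ a v, pd φ a v = pd ψ a v) (h₀ : φ 0 = ψ 0) : φ = ψ :=
  eq_of_fderiv_eq hφ hψ (fun v => ContinuousLinearMap.ext_pi_single (h · v)) 0 h₀

theorem pd_const_add (s : ℝ) (f : (Fin n → ℝ) → ℝ) (a : Fin n) (v : Fin n → ℝ) :
    pd (fun v => s + f v) a v = pd f a v := by
  simp only [pd, fderiv_const_add]

theorem pd_add {f h : (Fin n → ℝ) → ℝ} {v : Fin n → ℝ} (hf : DifferentiableAt ℝ f v)
    (hh : DifferentiableAt ℝ h v) (a : Fin n) :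
    pd (fun v => f v + h v) a v = pd f a v + pd h a v := by
  simp only [pd, fderiv_fun_add hf hh, add_apply]

theorem pd_add_sum_mul_const {f : (Fin n → ℝ) → ℝ} {G : Fin n → (Fin n → ℝ) → ℝ}
    {x : Fin n → ℝ} (hf : DifferentiableAt ℝ f x) (hG : ∀ c, DifferentiableAt ℝ (G c) x)
    (v : Fin n → ℝ) (b : Fin n) :
    pd (fun y => f y + ∑ c, G c y * v c) b x = pd f b x + ∑ c, pd (G c) b x * v c := by
  rw [pd_add hf (by fun_prop)]
  simp [pd, fderiv_fun_sum fun c _ => (hG c).mul_const (v c), fderiv_mul_const (hG _), mul_comm]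

theorem pd_linear (κ : Fin n → ℝ) (a : Fin n) (v : Fin n → ℝ) :
    pd (fun v => ∑ b, κ b * v b) a v = κ a := by
  have h : HasFDerivAt (fun v : Fin n → ℝ => ∑ b, κ b * v b) _ v :=
    HasFDerivAt.fun_sum fun b _ => (hasFDerivAt_apply (𝕜 := ℝ) b v).const_mul (κ b)
  simp [pd, h.fderiv, Pi.single_apply]

theorem pd_quadratic (M : Fin n → Fin n → ℝ) (a : Fin n) (v : Fin n → ℝ) :
    pd (fun v => ∑ b, ∑ c, M b c * v b * v c) a v = ∑ c, (M a c + M c a) * v c := by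
  have h : HasFDerivAt (fun v : Fin n → ℝ => ∑ b, ∑ c, M b c * v b * v c) _ v :=
    HasFDerivAt.fun_sum fun b _ => HasFDerivAt.fun_sum fun c _ =>
      ((hasFDerivAt_apply (𝕜 := ℝ) b v).const_mul (M b c)).mul (hasFDerivAt_apply c v)
  simp [pd, h.fderiv, Pi.single_apply, Finset.sum_add_distrib, add_mul, mul_comm (v _), add_comm]

theorem pdx_eq_pd {f : (Fin n → ℝ) × (Fin n → ℝ) → ℝ} {x v : Fin n → ℝ}
    (hf : DifferentiableAt ℝ f (x, v)) (a : Fin n) :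
    pdx f a (x, v) = pd (fun y => f (y, v)) a x := by
  have h : HasFDerivAt (fun y => f (y, v)) _ x :=
    hf.hasFDerivAt.comp x (hasFDerivAt_prodMk_left x v)
  rw [pd, h.fderiv]
  rfl

theorem pdv_eq_pd {f : (Fin n → ℝ) × (Fin n → ℝ) → ℝ} {x v : Fin n → ℝ}
    (hf : DifferentiableAt ℝ f (x, v)) (a : Fin n) :
    pdv f a (x, v) = pd (fun w => f (x, w)) a v := by
  have h : HasFDerivAt (fun w => f (x, w)) _ v :=
    hf.hasFDerivAt.comp v (hasFDerivAt_prodMk_right x v)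
  rw [pd, h.fderiv]
  rfl

theorem contDiffOn_pd {s : Set (Fin n → ℝ)} {f : (Fin n → ℝ) → ℝ} (hs : IsOpen s)
    (hf : ContDiffOn ℝ (⊤ : ℕ∞) f s) (a : Fin n) : ContDiffOn ℝ (⊤ : ℕ∞) (pd f a) s :=
  hf.fderiv_apply_of_isOpen hs (by simp) _

variable {s : Set ((Fin n → ℝ) × (Fin n → ℝ))} {L : (Fin n → ℝ) × (Fin n → ℝ) → ℝ}

theorem contDiffOn_pdx (hs : IsOpen s) (hL : ContDiffOn ℝ (⊤ : ℕ∞) L s) (a : Fin n) :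
    ContDiffOn ℝ (⊤ : ℕ∞) (pdx L a) s :=
  hL.fderiv_apply_of_isOpen hs (by simp) _

theorem contDiffOn_pdv (hs : IsOpen s) (hL : ContDiffOn ℝ (⊤ : ℕ∞) L s) (a : Fin n) :
    ContDiffOn ℝ (⊤ : ℕ∞) (pdv L a) s :=
  hL.fderiv_apply_of_isOpen hs (by simp) _

theorem pdv_pdx_comm (hs : IsOpen s) (hL : ContDiffOn ℝ (⊤ : ℕ∞) L s)
    {p : (Fin n → ℝ) × (Fin n → ℝ)} (hp : p ∈ s) (a b : Fin n) :
    pdv (pdx L a) b p = pdx (pdv L b) a p :=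
  fderiv_fderiv_apply_comm ((hL.contDiffAt (hs.mem_nhds hp)).of_le (WithTop.coe_le_coe.2 le_top))
    _ _

theorem differentiableAt_of_contDiffOn_prod_univ {f : (Fin n → ℝ) × (Fin n → ℝ) → ℝ}
    {U : Set (Fin n → ℝ)} {x : Fin n → ℝ} (hU : IsOpen U)
    (hf : ContDiffOn ℝ (⊤ : ℕ∞) f (U ×ˢ Set.univ)) (hx : x ∈ U) (v : Fin n → ℝ) :
    DifferentiableAt ℝ f (x, v) :=
  (hf.contDiffAt ((hU.prod isOpen_univ).mem_nhds ⟨hx, trivial⟩)).differentiableAt (by simp)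

theorem pd_entry_symm {U : Set (Fin n → ℝ)} {g : (Fin n → ℝ) → Fin n → Fin n → ℝ}
    {x : Fin n → ℝ} (hU : IsOpen U) (hgsym : ∀ x ∈ U, ∀ a b, g x a b = g x b a) (hx : x ∈ U)
    (a b c : Fin n) : pd (fun y => g y b c) a x = pd (fun y => g y c b) a x := by
  have hnear : (fun y => g y b c) =ᶠ[𝓝 x] fun y => g y c b :=
    eventually_of_mem (hU.mem_nhds hx) fun y hy => hgsym y hy b c
  rw [pd, hnear.fderiv_eq, ← pd]

end PartialDerivatives

noncomputable def christoffelFirst {n : ℕ} (H : (Fin n → ℝ) → Fin n → Fin n → ℝ)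
    (x : Fin n → ℝ) (a b c : Fin n) : ℝ :=
  1 / 2 * (pd (fun y => H y c a) b x + pd (fun y => H y b a) c x - pd (fun y => H y b c) a x)

theorem christoffel_eq_sum_minv_mul {n : ℕ} (H : (Fin n → ℝ) → Fin n → Fin n → ℝ)
    (x : Fin n → ℝ) (a b c : Fin n) :
    christoffel H x a b c = ∑ d, minv (H x) a d * christoffelFirst H x d b c := by
  simp only [christoffel, christoffelFirst, Finset.mul_sum]
  exact Finset.sum_congr rfl fun _ _ => by ring

theorem eq_sum_minv_mul_sum_mul {n : ℕ} {A : Fin n → Fin n → ℝ} (hA : IsUnit (Matrix.of A).det)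
    (y : Fin n → ℝ) (a : Fin n) : y a = ∑ d, minv A a d * ∑ b, A d b * y b := by
  have h : (Matrix.of A)⁻¹.mulVec ((Matrix.of A).mulVec y) = y := by
    rw [Matrix.mulVec_mulVec, Matrix.nonsing_inv_mul _ hA, Matrix.one_mulVec]
  exact (congrFun h a).symm

/-- `w` stands for the acceleration `ẍ`. -/
def IsLagrangianWithMultiplier {n : ℕ} (U : Set (Fin n → ℝ))
    (g : (Fin n → ℝ) → Fin n → Fin n → ℝ) (F : (Fin n → ℝ) → (Fin n → ℝ) → Fin n → ℝ)
    (L : (Fin n → ℝ) × (Fin n → ℝ) → ℝ) : Prop :=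
  ∀ x ∈ U, ∀ v w : Fin n → ℝ, ∀ a,
    ∑ b, pdv (pdv L a) b (x, v) * w b + ∑ b, pdx (pdv L a) b (x, v) * v b - pdx L a (x, v) =
      ∑ b, g x a b * (w b - F x v b)

namespace IsLagrangianWithMultiplier

variable {n : ℕ} {U : Set (Fin n → ℝ)} {g : (Fin n → ℝ) → Fin n → Fin n → ℝ}
  {F : (Fin n → ℝ) → (Fin n → ℝ) → Fin n → ℝ} {L : (Fin n → ℝ) × (Fin n → ℝ) → ℝ}
  {x : Fin n → ℝ}

theorem pdv_pdv_eq (hEL : IsLagrangianWithMultiplier U g F L) (hx : x ∈ U) (v : Fin n → ℝ)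
    (a c : Fin n) : pdv (pdv L a) c (x, v) = g x a c := by
  have h₁ := hEL x hx v (Pi.single c 1) a
  have h₀ := hEL x hx v 0 a
  simp only [Pi.single_apply, mul_ite, mul_one, mul_zero, Finset.sum_ite_eq', Finset.mem_univ,
    ↓reduceIte, mul_sub, Finset.sum_sub_distrib, Pi.zero_apply, Finset.sum_const_zero, zero_add,
    zero_sub, mul_neg, Finset.sum_neg_distrib] at h₁ h₀
  linarith

theorem pdv_eq_add_sum (hEL : IsLagrangianWithMultiplier U g F L) (hU : IsOpen U)
    (hL : ContDiffOn ℝ (⊤ : ℕ∞) L (U ×ˢ Set.univ)) (hx : x ∈ U) (a : Fin n) (v : Fin n → ℝ) :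
    pdv L a (x, v) = pdv L a (x, 0) + ∑ c, g x a c * v c := by
  have hdiff := differentiableAt_of_contDiffOn_prod_univ hU
    (contDiffOn_pdv (hU.prod isOpen_univ) hL a) hx
  refine congrFun (eq_of_pd_eq (φ := fun w => pdv L a (x, w))
    (ψ := fun w => pdv L a (x, 0) + ∑ c, g x a c * w c)
    (fun w => (hdiff w).comp w ((differentiableAt_const x).prodMk differentiableAt_id))
    (by fun_prop) (fun c w => ?_) (by simp)) v
  rw [pd_const_add, pd_linear, ← pdv_eq_pd (hdiff w), hEL.pdv_pdv_eq hx]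

theorem pdx_pdv_eq (hEL : IsLagrangianWithMultiplier U g F L) (hU : IsOpen U)
    (hg : ContDiffOn ℝ (⊤ : ℕ∞) g U) (hL : ContDiffOn ℝ (⊤ : ℕ∞) L (U ×ˢ Set.univ))
    (hx : x ∈ U) (a b : Fin n) (v : Fin n → ℝ) :
    pdx (pdv L a) b (x, v) =
      pd (fun y => pdv L a (y, 0)) b x + ∑ c, pd (fun y => g y a c) b x * v c := by
  have hdiff := differentiableAt_of_contDiffOn_prod_univ hU
    (contDiffOn_pdv (hU.prod isOpen_univ) hL a) hx
  have hgx : DifferentiableAt ℝ g x := (hg.contDiffAt (hU.mem_nhds hx)).differentiableAt (by simp)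
  have hnear : (fun y => pdv L a (y, v)) =ᶠ[𝓝 x] fun y => pdv L a (y, 0) + ∑ c, g y a c * v c :=
    eventually_of_mem (hU.mem_nhds hx) fun y hy => hEL.pdv_eq_add_sum hU hL hy a v
  rw [pdx_eq_pd (hdiff v), pd, hnear.fderiv_eq, ← pd]
  exact pd_add_sum_mul_const
    ((hdiff 0).comp x (differentiableAt_id.prodMk (differentiableAt_const (0 : Fin n → ℝ))))
    (fun c => differentiableAt_pi.1 (differentiableAt_pi.1 hgx a) c) v b

theorem pdx_eq_add_sum_add_sum (hEL : IsLagrangianWithMultiplier U g F L) (hU : IsOpen U)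
    (hg : ContDiffOn ℝ (⊤ : ℕ∞) g U) (hgsym : ∀ x ∈ U, ∀ a b, g x a b = g x b a)
    (hL : ContDiffOn ℝ (⊤ : ℕ∞) L (U ×ˢ Set.univ)) (hx : x ∈ U) (a : Fin n) (v : Fin n → ℝ) :
    pdx L a (x, v) = pdx L a (x, 0) + ∑ b, pd (fun y => pdv L b (y, 0)) a x * v b
      + ∑ b, ∑ c, 1 / 2 * pd (fun y => g y b c) a x * v b * v c := by
  have hdiff := differentiableAt_of_contDiffOn_prod_univ hU
    (contDiffOn_pdx (hU.prod isOpen_univ) hL a) hx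
  refine congrFun (eq_of_pd_eq (φ := fun w => pdx L a (x, w))
    (ψ := fun w => pdx L a (x, 0) + ∑ b, pd (fun y => pdv L b (y, 0)) a x * w b
      + ∑ b, ∑ c, 1 / 2 * pd (fun y => g y b c) a x * w b * w c)
    (fun w => (hdiff w).comp w ((differentiableAt_const x).prodMk differentiableAt_id))
    (by fun_prop) (fun d w => ?_) (by simp)) v
  rw [pd_add (by fun_prop) (by fun_prop), pd_const_add, pd_linear, pd_quadratic,
    ← pdv_eq_pd (hdiff w), pdv_pdx_comm (hU.prod isOpen_univ) hL ⟨hx, trivial⟩,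
    hEL.pdx_pdv_eq hU hg hL hx]
  congr 1
  refine Finset.sum_congr rfl fun c _ => ?_
  rw [pd_entry_symm hU hgsym hx a c d]
  ring

theorem sum_mul_force_eq (hEL : IsLagrangianWithMultiplier U g F L) (hU : IsOpen U)
    (hg : ContDiffOn ℝ (⊤ : ℕ∞) g U) (hgsym : ∀ x ∈ U, ∀ a b, g x a b = g x b a)
    (hL : ContDiffOn ℝ (⊤ : ℕ∞) L (U ×ˢ Set.univ)) (hx : x ∈ U) (a : Fin n) (v : Fin n → ℝ) :
    ∑ b, g x a b * F x v b = pdx L a (x, 0)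
      + ∑ b, (pd (fun y => pdv L b (y, 0)) a x - pd (fun y => pdv L a (y, 0)) b x) * v b
      - ∑ b, ∑ c, christoffelFirst g x a b c * v b * v c := by
  have hEL₀ := hEL x hx v 0 a
  rw [hEL.pdx_eq_add_sum_add_sum hU hg hgsym hL hx] at hEL₀
  simp only [Pi.zero_apply, mul_zero, Finset.sum_const_zero, zero_add, zero_sub, mul_neg,
    Finset.sum_neg_distrib, hEL.pdx_pdv_eq hU hg hL hx] at hEL₀
  have hΓ := sum_sum_christoffel_combination_mul (fun e b c => pd (fun y => g y b c) e x)
    (fun e b c => pd_entry_symm hU hgsym hx e b c) a v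
  simp only [christoffelFirst, hΓ]
  simp only [add_mul, sub_mul, Finset.sum_add_distrib, Finset.sum_sub_distrib] at hEL₀ ⊢
  linarith

end IsLagrangianWithMultiplier

theorem force_variational_multiplier_g_general {n : ℕ} (U : Set (Fin n → ℝ)) (hU : IsOpen U)
    (g : (Fin n → ℝ) → Fin n → Fin n → ℝ)
    (hg : ContDiffOn ℝ (⊤ : ℕ∞) g U)
    (hgsym : ∀ x ∈ U, ∀ a b, g x a b = g x b a)
    (hginv : ∀ x ∈ U, IsUnit (Matrix.of (g x)).det)
    (F : (Fin n → ℝ) → (Fin n → ℝ) → Fin n → ℝ)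
    (L : (Fin n → ℝ) × (Fin n → ℝ) → ℝ)
    (hL : ContDiffOn ℝ (⊤ : ℕ∞) L (U ×ˢ (Set.univ : Set (Fin n → ℝ))))
    (hEL : ∀ x ∈ U, ∀ v w : Fin n → ℝ, ∀ a,
      ∑ b, pdv (pdv L a) b (x, v) * w b + ∑ b, pdx (pdv L a) b (x, v) * v b
        - pdx L a (x, v) =
      ∑ b, g x a b * (w b - F x v b)) :
    ∃ P : (Fin n → ℝ) → Fin n → Fin n → ℝ, ∃ S : (Fin n → ℝ) → Fin n → ℝ,
      ContDiffOn ℝ (⊤ : ℕ∞) P U ∧ ContDiffOn ℝ (⊤ : ℕ∞) S U ∧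
      ∀ x ∈ U, ∀ v : Fin n → ℝ, ∀ a,
        F x v a = - (∑ b, ∑ c, christoffel g x a b c * v b * v c)
          + ∑ b, P x a b * v b + S x a := by
  have hLag : IsLagrangianWithMultiplier U g F L := hEL
  have hUU := hU.prod (isOpen_univ (X := Fin n → ℝ))
  have hzero : Set.MapsTo (fun y : Fin n → ℝ => (y, (0 : Fin n → ℝ))) U (U ×ˢ Set.univ) :=
    fun y hy => ⟨hy, trivial⟩
  have hA : ∀ b, ContDiffOn ℝ (⊤ : ℕ∞) (fun y => pdv L b (y, 0)) U := fun b =>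
    (contDiffOn_pdv hUU hL b).comp (contDiffOn_id.prodMk contDiffOn_const) hzero
  have hminv : ∀ a d, ContDiffOn ℝ (⊤ : ℕ∞) (fun x => minv (g x) a d) U := fun a d =>
    contDiffOn_pi.1 (contDiffOn_pi.1 (hg.minv hginv) a) d
  refine ⟨fun x a b => ∑ d, minv (g x) a d *
      (pd (fun y => pdv L b (y, 0)) d x - pd (fun y => pdv L d (y, 0)) b x),
    fun x a => ∑ d, minv (g x) a d * pdx L d (x, 0), ?_, ?_, fun x hx v a => ?_⟩
  · refine contDiffOn_pi.2 fun a => contDiffOn_pi.2 fun b => ContDiffOn.sum fun d _ => ?_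
    exact (hminv a d).mul ((contDiffOn_pd hU (hA b) d).sub (contDiffOn_pd hU (hA d) b))
  · refine contDiffOn_pi.2 fun a => ContDiffOn.sum fun d _ => (hminv a d).mul ?_
    exact (contDiffOn_pdx hUU hL d).comp (contDiffOn_id.prodMk contDiffOn_const) hzero
  rw [eq_sum_minv_mul_sum_mul (hginv x hx) (F x v) a]
  simp only [hLag.sum_mul_force_eq hU hg hgsym hL hx, sum_mul_affine_quadratic,
    christoffel_eq_sum_minv_mul]

/-- **Most general force variational with multiplier `g`** (Proposition 3.1): if the system
`g_{ab}(ẍ^b − F^b)` is the Euler–Lagrange expression of some smooth Lagrangian, then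
`F^a = −Γ[g]^a_{bc} v^b v^c + P^a_b v^b + S^a`. -/
theorem force_variational_multiplier_g {n : ℕ} (U : Set (Fin n → ℝ)) (hU : IsOpen U)
    (g : (Fin n → ℝ) → Fin n → Fin n → ℝ)
    (hg : ContDiffOn ℝ (⊤ : ℕ∞) g U)
    (hgsym : ∀ x ∈ U, ∀ a b, g x a b = g x b a)
    (hginv : ∀ x ∈ U, IsUnit (Matrix.of (g x)).det)
    (F : (Fin n → ℝ) → (Fin n → ℝ) → Fin n → ℝ)
    (hF : ContDiffOn ℝ (⊤ : ℕ∞) (fun p : (Fin n → ℝ) × (Fin n → ℝ) => F p.1 p.2)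
      (U ×ˢ (Set.univ : Set (Fin n → ℝ))))
    (L : (Fin n → ℝ) × (Fin n → ℝ) → ℝ)
    (hL : ContDiffOn ℝ (⊤ : ℕ∞) L (U ×ˢ (Set.univ : Set (Fin n → ℝ))))
    (hEL : ∀ x ∈ U, ∀ v w : Fin n → ℝ, ∀ a,
      ∑ b, pdv (pdv L a) b (x, v) * w b + ∑ b, pdx (pdv L a) b (x, v) * v b
        - pdx L a (x, v) =
      ∑ b, g x a b * (w b - F x v b)) :
    ∃ P : (Fin n → ℝ) → Fin n → Fin n → ℝ, ∃ S : (Fin n → ℝ) → Fin n → ℝ,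
      ContDiffOn ℝ (⊤ : ℕ∞) P U ∧ ContDiffOn ℝ (⊤ : ℕ∞) S U ∧
      ∀ x ∈ U, ∀ v : Fin n → ℝ, ∀ a,
        F x v a = - (∑ b, ∑ c, christoffel g x a b c * v b * v c)
          + ∑ b, P x a b * v b + S x a :=
  force_variational_multiplier_g_general U hU g hg hgsym hginv F L hL hEL
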